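/- For every k ∈ ℤ there exists a constant C > 0 such that for all integers d with d > 2|k| + 2, d·E[((ξ_d/d)^{k/2} − 1)²] ≤ C, where ξ_d is a chi-squared random variable with d degrees of freedom. -/

import Mathlib

/-!
Write `t = ξ_d / d`. Pointwise, `(t^{k/2} - 1)² ≤ 4k² (1 + t^{k-1}) (t - 1)²`, by a geometric sum
in `√t`. The moments `M_d(r) = E[t^r] = (2/d)^r Γ(d/2 + r) / Γ(d/2)` satisfy
`M_d(r + 1) = (1 + 2r/d) M_d(r)`, hence `d · E[t^r (t - 1)²] = (2 + 4r(r+1)/d) M_d(r)`, and for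
integers `r` with `2|r| < d` the same recursion bounds `M_d(r)` by `(2|r| + 1)^{|r|}`, uniformly
in `d`.
-/

open MeasureTheory ENNReal Filter Topology

noncomputable section

/-- The chi-squared distribution with `d` degrees of freedom: the measure on `(0,∞)`
with density `x ↦ (1/2)^{d/2} Γ(d/2)⁻¹ x^{d/2-1} e^{-x/2}`. -/
def chiSq (d : ℕ) : Measure ℝ :=
  (volume.restrict (Set.Ioi 0)).withDensity fun x =>
    ENNReal.ofReal ((1 / 2 : ℝ) ^ ((d : ℝ) / 2) / Real.Gamma ((d : ℝ) / 2) *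
      x ^ ((d : ℝ) / 2 - 1) * Real.exp (-x / 2))

open Real Set

lemma pow_le_one_add_pow {s : ℝ} (hs : 0 ≤ s) {i n : ℕ} (hin : i ≤ n) : s ^ i ≤ 1 + s ^ n := by
  rcases le_total s 1 with h | h
  · linarith [pow_le_one₀ hs h (n := i), pow_nonneg hs n]
  · linarith [pow_le_pow_right₀ h hin]

lemma sq_pow_sub_one_le {s : ℝ} (hs : 0 ≤ s) (n : ℕ) :
    (s ^ n - 1) ^ 2 ≤ n ^ 2 * (s - 1) ^ 2 * (1 + s ^ (n - 1)) ^ 2 := by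
  have hsum : ∑ i ∈ Finset.range n, s ^ i ≤ n * (1 + s ^ (n - 1)) := by
    simpa only [Finset.card_range, nsmul_eq_mul] using
      Finset.sum_le_card_nsmul (Finset.range n) (s ^ ·) _ fun i hi =>
        pow_le_one_add_pow hs (Nat.le_sub_one_of_lt (Finset.mem_range.1 hi))
  calc (s ^ n - 1) ^ 2 = (s - 1) ^ 2 * (∑ i ∈ Finset.range n, s ^ i) ^ 2 := by
        rw [← geom_sum_mul]; ring
    _ ≤ (s - 1) ^ 2 * (n * (1 + s ^ (n - 1))) ^ 2 := by gcongr
    _ = n ^ 2 * (s - 1) ^ 2 * (1 + s ^ (n - 1)) ^ 2 := by ring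

lemma rpow_natCast_div_two_sub_one_sq_le {t : ℝ} (ht : 0 < t) (n : ℕ) :
    (t ^ ((n : ℝ) / 2) - 1) ^ 2 ≤ 2 * n ^ 2 * (t - 1) ^ 2 * (1 + t ^ ((n : ℝ) - 1)) := by
  rcases Nat.eq_zero_or_pos n with rfl | hn
  · calc _ = (0 : ℝ) := by simp
      _ ≤ _ := by positivity
  set s := √t
  have hs : 0 ≤ s := sqrt_nonneg t
  have hst : s ^ 2 = t := sq_sqrt ht.le
  have hhalf : t ^ ((n : ℝ) / 2) = s ^ n := by
    rw [div_eq_inv_mul, Real.rpow_mul ht.le, ← one_div, ← sqrt_eq_rpow, Real.rpow_natCast]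
  have hpred : t ^ ((n : ℝ) - 1) = (s ^ (n - 1)) ^ 2 := by
    rw [← Nat.cast_pred hn, Real.rpow_natCast, ← hst, ← pow_mul, ← pow_mul, mul_comm]
  -- `|√t - 1| ≤ |√t - 1| (√t + 1) = |t - 1|`
  have hsqrt : (s - 1) ^ 2 ≤ (t - 1) ^ 2 := by
    rw [← hst]; nlinarith [sq_nonneg (s - 1), mul_nonneg hs (sq_nonneg (s - 1))]
  rw [hhalf, hpred]
  calc (s ^ n - 1) ^ 2 ≤ n ^ 2 * (s - 1) ^ 2 * (1 + s ^ (n - 1)) ^ 2 := sq_pow_sub_one_le hs n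
    _ ≤ n ^ 2 * (t - 1) ^ 2 * (2 * (1 + (s ^ (n - 1)) ^ 2)) := by
        gcongr; nlinarith [sq_nonneg (1 - s ^ (n - 1))]
    _ = _ := by ring

lemma rpow_le_one_add_rpow {t a b : ℝ} (ht : 0 < t) (hba : b ≤ a) (ha : a ≤ 0) :
    t ^ a ≤ 1 + t ^ b := by
  rcases le_total t 1 with h | h
  · linarith [Real.rpow_le_rpow_of_exponent_ge ht h hba]
  · linarith [Real.rpow_le_one_of_one_le_of_nonpos h ha, Real.rpow_nonneg ht.le b]

lemma rpow_intCast_div_two_sub_one_sq_le {t : ℝ} (ht : 0 < t) (k : ℤ) :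
    (t ^ ((k : ℝ) / 2) - 1) ^ 2 ≤ 4 * k ^ 2 * ((t - 1) ^ 2 + t ^ ((k : ℝ) - 1) * (t - 1) ^ 2) := by
  obtain ⟨n, rfl | rfl⟩ := Int.eq_nat_or_neg k
  · have hbound := rpow_natCast_div_two_sub_one_sq_le ht n
    have : 0 ≤ (n : ℝ) ^ 2 * (t - 1) ^ 2 * (1 + t ^ ((n : ℝ) - 1)) := by positivity
    push_cast
    linarith
  · set u := t ^ ((n : ℝ) / 2)
    have hu : 0 < u := Real.rpow_pos_of_pos ht _
    have hu_sq : u ^ 2 = t ^ (n : ℝ) := by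
      rw [← Real.rpow_natCast, ← Real.rpow_mul ht.le]; norm_num
    have hinv : t ^ (-(n : ℝ)) * t ^ ((n : ℝ) - 1) = t ^ (-1 : ℝ) := by
      rw [← Real.rpow_add ht]; ring_nf
    have h₁ := rpow_le_one_add_rpow ht (by linarith : -(n : ℝ) - 1 ≤ -n) (by simp)
    have h₂ := rpow_le_one_add_rpow ht (by simp : -(n : ℝ) - 1 ≤ -1) (by norm_num)
    calc (t ^ (((-n : ℤ) : ℝ) / 2) - 1) ^ 2 = t ^ (-(n : ℝ)) * (u - 1) ^ 2 := by
          rw [Int.cast_neg, Int.cast_natCast, neg_div, Real.rpow_neg ht.le, Real.rpow_neg ht.le,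
            ← hu_sq]
          field_simp
          ring
      _ ≤ t ^ (-(n : ℝ)) * (2 * n ^ 2 * (t - 1) ^ 2 * (1 + t ^ ((n : ℝ) - 1))) := by
          gcongr; exact rpow_natCast_div_two_sub_one_sq_le ht n
      _ = 2 * n ^ 2 * (t - 1) ^ 2 * (t ^ (-(n : ℝ)) + t ^ (-1 : ℝ)) := by rw [← hinv]; ring
      _ ≤ 2 * n ^ 2 * (t - 1) ^ 2 * (2 * (1 + t ^ (-(n : ℝ) - 1))) := by gcongr; linarith
      _ = _ := by push_cast; ring

def chiSqPDFReal (d : ℕ) (x : ℝ) : ℝ :=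
  (1 / 2 : ℝ) ^ ((d : ℝ) / 2) / Gamma ((d : ℝ) / 2) * x ^ ((d : ℝ) / 2 - 1) * exp (-x / 2)

lemma chiSq_eq_withDensity (d : ℕ) :
    chiSq d = (volume.restrict (Ioi 0)).withDensity fun x => ENNReal.ofReal (chiSqPDFReal d x) :=
  rfl

lemma ae_pos_chiSq (d : ℕ) : ∀ᵐ x ∂chiSq d, 0 < x :=
  (withDensity_absolutelyContinuous _ _).ae_le (ae_restrict_mem measurableSet_Ioi)

lemma measurable_chiSqPDFReal (d : ℕ) : Measurable (chiSqPDFReal d) := by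
  unfold chiSqPDFReal; fun_prop

lemma toReal_ofReal_chiSqPDFReal_ae (d : ℕ) :
    ∀ᵐ x ∂volume.restrict (Ioi (0 : ℝ)),
      (ENNReal.ofReal (chiSqPDFReal d x)).toReal = chiSqPDFReal d x := by
  refine ae_restrict_of_forall_mem measurableSet_Ioi fun x (hx : 0 < x) => ?_
  exact ENNReal.toReal_ofReal (by unfold chiSqPDFReal; positivity)

lemma integrable_chiSq_iff {d : ℕ} {g : ℝ → ℝ} :
    Integrable g (chiSq d) ↔ IntegrableOn (fun x => chiSqPDFReal d x * g x) (Ioi 0) := by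
  rw [chiSq_eq_withDensity, integrable_withDensity_iff_integrable_smul'
    (measurable_chiSqPDFReal d).ennreal_ofReal (Eventually.of_forall fun _ => ofReal_lt_top)]
  exact integrable_congr <| (toReal_ofReal_chiSqPDFReal_ae d).mono fun x hx => by
    simp only [hx, smul_eq_mul]

lemma integral_chiSq_eq (d : ℕ) (g : ℝ → ℝ) :
    ∫ x, g x ∂chiSq d = ∫ x in Ioi 0, chiSqPDFReal d x * g x := by
  rw [chiSq_eq_withDensity, integral_withDensity_eq_integral_toReal_smul
    (measurable_chiSqPDFReal d).ennreal_ofReal (Eventually.of_forall fun _ => ofReal_lt_top)]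
  exact integral_congr_ae <| (toReal_ofReal_chiSqPDFReal_ae d).mono fun x hx => by
    simp only [hx, smul_eq_mul]

lemma chiSqPDFReal_mul_rpow (d : ℕ) (s : ℝ) {x : ℝ} (hx : 0 < x) :
    chiSqPDFReal d x * x ^ s = (1 / 2 : ℝ) ^ ((d : ℝ) / 2) / Gamma ((d : ℝ) / 2) *
      (x ^ ((d : ℝ) / 2 + s - 1) * exp (-(2⁻¹ * x))) := by
  rw [chiSqPDFReal, add_sub_right_comm, rpow_add hx, neg_div, ← div_eq_inv_mul]
  ring

lemma integrable_rpow_chiSq {d : ℕ} {s : ℝ} (hs : 0 < (d : ℝ) / 2 + s) :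
    Integrable (fun x => x ^ s) (chiSq d) := by
  have h := integrableOn_rpow_mul_exp_neg_mul_rpow (p := 1) (s := (d : ℝ) / 2 + s - 1)
    (b := 2⁻¹) (by linarith) one_pos (by norm_num)
  simp only [Real.rpow_one, neg_mul] at h
  exact integrable_chiSq_iff.2 <| IntegrableOn.congr_fun (h.const_mul _)
    (fun x hx => (chiSqPDFReal_mul_rpow d s hx).symm) measurableSet_Ioi

lemma integral_rpow_chiSq {d : ℕ} {s : ℝ} (hs : 0 < (d : ℝ) / 2 + s) :
    ∫ x, x ^ s ∂chiSq d = 2 ^ s * Gamma ((d : ℝ) / 2 + s) / Gamma ((d : ℝ) / 2) := by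
  rw [integral_chiSq_eq, setIntegral_congr_fun measurableSet_Ioi
    (fun x hx => chiSqPDFReal_mul_rpow d s hx), integral_const_mul,
    integral_rpow_mul_exp_neg_mul_Ioi hs (by norm_num)]
  simp only [one_div, inv_inv]
  rw [inv_rpow zero_le_two, rpow_add zero_lt_two]
  field_simp

def scaledChiSqMoment (d : ℕ) (r : ℝ) : ℝ :=
  (2 / (d : ℝ)) ^ r * Gamma ((d : ℝ) / 2 + r) / Gamma ((d : ℝ) / 2)

lemma integrable_div_rpow_chiSq {d : ℕ} {r : ℝ} (hr : 0 < (d : ℝ) / 2 + r) :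
    Integrable (fun x : ℝ => (x / d) ^ r) (chiSq d) :=
  ((integrable_rpow_chiSq hr).div_const _).congr <| (ae_pos_chiSq d).mono fun _ hx =>
    (div_rpow hx.le d.cast_nonneg r).symm

lemma integral_div_rpow_chiSq {d : ℕ} {r : ℝ} (hr : 0 < (d : ℝ) / 2 + r) :
    ∫ x, (x / d) ^ r ∂chiSq d = scaledChiSqMoment d r := by
  rw [integral_congr_ae <| (ae_pos_chiSq d).mono fun x hx => div_rpow hx.le d.cast_nonneg r,
    integral_div, integral_rpow_chiSq hr, scaledChiSqMoment, div_rpow zero_le_two d.cast_nonneg]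
  ring

lemma scaledChiSqMoment_zero {d : ℕ} (hd : 0 < d) : scaledChiSqMoment d 0 = 1 := by
  have : 0 < Gamma ((d : ℝ) / 2) := Gamma_pos_of_pos (by positivity)
  simp [scaledChiSqMoment, this.ne']

lemma scaledChiSqMoment_nonneg (d : ℕ) {r : ℝ} (hr : 0 ≤ (d : ℝ) / 2 + r) :
    0 ≤ scaledChiSqMoment d r := by
  unfold scaledChiSqMoment
  have := Gamma_nonneg_of_nonneg hr
  positivity

lemma scaledChiSqMoment_add_one {d : ℕ} (hd : 0 < d) {r : ℝ} (hr : (d : ℝ) / 2 + r ≠ 0) :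
    scaledChiSqMoment d (r + 1) = (1 + 2 * r / d) * scaledChiSqMoment d r := by
  have hd' : (0 : ℝ) < d := by exact_mod_cast hd
  rw [scaledChiSqMoment, scaledChiSqMoment, Real.rpow_add (by positivity), Real.rpow_one,
    ← add_assoc, Gamma_add_one hr]
  field_simp

lemma div_rpow_mul_sub_one_sq_ae_eq {d : ℕ} (hd : 0 < d) (r : ℝ) :
    (fun x : ℝ => (x / d) ^ (r + 1 + 1) - 2 * (x / d) ^ (r + 1) + (x / d) ^ r)
      =ᵐ[chiSq d] fun x => (x / d) ^ r * (x / d - 1) ^ 2 :=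
  (ae_pos_chiSq d).mono fun x hx => by
    simp only [Real.rpow_add (div_pos hx (Nat.cast_pos.2 hd)), Real.rpow_one]
    ring

lemma integrable_div_rpow_mul_sub_one_sq_chiSq {d : ℕ} (hd : 0 < d) {r : ℝ}
    (hr : 0 < (d : ℝ) / 2 + r) :
    Integrable (fun x : ℝ => (x / d) ^ r * (x / d - 1) ^ 2) (chiSq d) :=
  (((integrable_div_rpow_chiSq (by linarith)).sub
    ((integrable_div_rpow_chiSq (by linarith)).const_mul 2)).add
    (integrable_div_rpow_chiSq hr)).congr (div_rpow_mul_sub_one_sq_ae_eq hd r)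

lemma integral_div_rpow_mul_sub_one_sq_chiSq {d : ℕ} (hd : 0 < d) {r : ℝ}
    (hr : 0 < (d : ℝ) / 2 + r) :
    ∫ x, (x / d) ^ r * (x / d - 1) ^ 2 ∂chiSq d = scaledChiSqMoment d (r + 1 + 1)
      - 2 * scaledChiSqMoment d (r + 1) + scaledChiSqMoment d r := by
  have hr₁ : 0 < (d : ℝ) / 2 + (r + 1) := by linarith
  have hr₂ : 0 < (d : ℝ) / 2 + (r + 1 + 1) := by linarith
  have hint₁ := (integrable_div_rpow_chiSq hr₁).const_mul 2
  have hint₂ := integrable_div_rpow_chiSq hr₂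
  have hint₃ : Integrable (fun x : ℝ => (x / d) ^ (r + 1 + 1) - 2 * (x / d) ^ (r + 1))
    (chiSq d) := hint₂.sub hint₁
  rw [← integral_congr_ae (div_rpow_mul_sub_one_sq_ae_eq hd r),
    integral_add hint₃ (integrable_div_rpow_chiSq hr), integral_sub hint₂ hint₁,
    integral_const_mul, integral_div_rpow_chiSq hr, integral_div_rpow_chiSq hr₁,
    integral_div_rpow_chiSq hr₂]

lemma mul_integral_div_rpow_mul_sub_one_sq_chiSq {d : ℕ} (hd : 0 < d) {r : ℝ}
    (hr : 0 < (d : ℝ) / 2 + r) :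
    d * ∫ x, (x / d) ^ r * (x / d - 1) ^ 2 ∂chiSq d
      = (2 + 4 * r * (r + 1) / d) * scaledChiSqMoment d r := by
  have hd' : (0 : ℝ) < d := by exact_mod_cast hd
  rw [integral_div_rpow_mul_sub_one_sq_chiSq hd hr, scaledChiSqMoment_add_one hd (by linarith),
    scaledChiSqMoment_add_one hd hr.ne']
  field_simp
  ring

lemma scaledChiSqMoment_natCast_le {d m j : ℕ} (hj : j ≤ m) (hm : 2 * m < d) :
    scaledChiSqMoment d j ≤ (2 * m + 1) ^ j := by
  have hd' : (2 * m + 1 : ℝ) ≤ d := by exact_mod_cast hm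
  induction j with
  | zero => simp [scaledChiSqMoment_zero (by omega : 0 < d)]
  | succ j ih =>
    have hj' : (j : ℝ) + 1 ≤ m := by exact_mod_cast hj
    have hfactor : 1 + 2 * (j : ℝ) / d ≤ 2 * m + 1 := by
      have : 2 * (j : ℝ) / d ≤ 2 * j := div_le_self (by positivity) (by linarith)
      linarith
    have hpos : (0 : ℝ) < d / 2 + j := by linarith
    rw [Nat.cast_succ, scaledChiSqMoment_add_one (by omega) hpos.ne', pow_succ']
    exact mul_le_mul hfactor (ih (by omega)) (scaledChiSqMoment_nonneg d hpos.le)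
      (by positivity)

lemma scaledChiSqMoment_neg_natCast_le {d m j : ℕ} (hj : j ≤ m) (hm : 2 * m < d) :
    scaledChiSqMoment d (-j) ≤ (2 * m + 1) ^ j := by
  have hd' : (2 * m + 1 : ℝ) ≤ d := by exact_mod_cast hm
  induction j with
  | zero => simp [scaledChiSqMoment_zero (by omega : 0 < d)]
  | succ j ih =>
    have hj' : (j : ℝ) + 1 ≤ m := by exact_mod_cast hj
    have hpos : 0 < (d : ℝ) / 2 + -((j : ℝ) + 1) := by linarith
    have hrec := scaledChiSqMoment_add_one (d := d) (by omega) hpos.ne'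
    rw [show -((j : ℝ) + 1) + 1 = -j by ring] at hrec
    -- `d / (d - 2(j+1)) ≤ 2m + 1` since `d - 2(j+1) ≥ d - 2m ≥ 1`
    have hfactor : 1 ≤ (2 * m + 1) * (1 + 2 * -((j : ℝ) + 1) / d) := by
      rw [← sub_nonneg]
      have : (0 : ℝ) < d := by linarith
      field_simp
      nlinarith
    rw [Nat.cast_succ, pow_succ']
    calc scaledChiSqMoment d (-((j : ℝ) + 1))
        ≤ (2 * m + 1) * (1 + 2 * -((j : ℝ) + 1) / d) * scaledChiSqMoment d (-((j : ℝ) + 1)) :=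
          le_mul_of_one_le_left (scaledChiSqMoment_nonneg d hpos.le) hfactor
      _ = (2 * m + 1) * scaledChiSqMoment d (-j) := by rw [hrec]; ring
      _ ≤ (2 * m + 1) * (2 * m + 1) ^ j := by gcongr; exact ih (by omega)

lemma scaledChiSqMoment_intCast_le {d : ℕ} (r : ℤ) (hr : 2 * r.natAbs < d) :
    scaledChiSqMoment d r ≤ (2 * r.natAbs + 1) ^ r.natAbs := by
  obtain ⟨m, rfl | rfl⟩ := Int.eq_nat_or_neg r
  · simpa using scaledChiSqMoment_natCast_le le_rfl (by simpa using hr)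
  · simpa using scaledChiSqMoment_neg_natCast_le le_rfl (by simpa using hr)

lemma half_add_intCast_pos {d : ℕ} {r : ℤ} (hr : 2 * r.natAbs < d) : 0 < (d : ℝ) / 2 + r := by
  have : (-r.natAbs : ℝ) ≤ r := by exact_mod_cast neg_abs_le r
  have : (2 * r.natAbs + 1 : ℝ) ≤ d := by exact_mod_cast hr
  linarith

lemma mul_integral_div_rpow_intCast_mul_sub_one_sq_chiSq_le {d : ℕ} (r : ℤ)
    (hr : 2 * r.natAbs < d) :
    d * ∫ x, (x / d) ^ (r : ℝ) * (x / d - 1) ^ 2 ∂chiSq d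
      ≤ (2 + 4 * r * (r + 1) : ℝ) * (2 * r.natAbs + 1) ^ r.natAbs := by
  have hd : (1 : ℝ) ≤ d := by exact_mod_cast (by omega : 1 ≤ d)
  have hr' := half_add_intCast_pos hr
  have hconsec : (0 : ℝ) ≤ r * (r + 1) := by
    have : (0 : ℤ) ≤ r * (r + 1) := by rcases le_or_gt 0 r with h | h <;> nlinarith
    exact_mod_cast this
  rw [mul_integral_div_rpow_mul_sub_one_sq_chiSq (by omega) hr']
  refine mul_le_mul ?_ (scaledChiSqMoment_intCast_le r hr) (scaledChiSqMoment_nonneg d hr'.le)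
    (by linarith)
  rw [mul_assoc]
  linarith [div_le_self (by positivity : (0 : ℝ) ≤ 4 * (r * (r + 1))) hd]

/-- For every `k ∈ ℤ` there is `C > 0` such that for all `d > 2|k| + 2`,
`d · E[((ξ_d/d)^{k/2} − 1)²] ≤ C`, where `ξ_d` is chi-squared with `d` degrees of freedom. -/
theorem chiSq_halfpow_second_moment_bound (k : ℤ) :
    ∃ C : ℝ, 0 < C ∧ ∀ d : ℕ, 2 * k.natAbs + 2 < d →
      (d : ℝ) * ∫ x, ((x / (d : ℝ)) ^ ((k : ℝ) / 2) - 1) ^ 2 ∂(chiSq d) ≤ C := by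
  refine ⟨max (4 * k ^ 2 * (2 + (2 + 4 * (k - 1) * k) * (2 * (k - 1).natAbs + 1) ^ (k - 1).natAbs))
    1, lt_max_of_lt_right one_pos, fun d hd => ?_⟩
  have hd₀ : 2 * (0 : ℤ).natAbs < d := by omega
  have hd₁ : 2 * (k - 1).natAbs < d := by omega
  have hint₀ := integrable_div_rpow_mul_sub_one_sq_chiSq (by omega) (half_add_intCast_pos hd₀)
  have hint₁ := integrable_div_rpow_mul_sub_one_sq_chiSq (by omega) (half_add_intCast_pos hd₁)
  have hw₀ := mul_integral_div_rpow_intCast_mul_sub_one_sq_chiSq_le 0 hd₀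
  have hw₁ := mul_integral_div_rpow_intCast_mul_sub_one_sq_chiSq_le (k - 1) hd₁
  norm_num at hint₀ hw₀
  simp only [Int.cast_sub, Int.cast_one, sub_add_cancel] at hint₁ hw₁
  calc (d : ℝ) * ∫ x, ((x / d) ^ ((k : ℝ) / 2) - 1) ^ 2 ∂chiSq d
      ≤ d * ∫ x, 4 * k ^ 2 * ((x / d - 1) ^ 2 + (x / d) ^ ((k : ℝ) - 1) * (x / d - 1) ^ 2)
          ∂chiSq d := by
        refine mul_le_mul_of_nonneg_left (integral_mono_of_nonneg
          (Eventually.of_forall fun _ => sq_nonneg _) ((hint₀.add hint₁).const_mul _)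
          ((ae_pos_chiSq d).mono fun x hx => ?_)) d.cast_nonneg
        exact rpow_intCast_div_two_sub_one_sq_le (div_pos hx (by positivity)) k
    _ = 4 * k ^ 2 * (d * ∫ x, (x / d - 1) ^ 2 ∂chiSq d
          + d * ∫ x, (x / d) ^ ((k : ℝ) - 1) * (x / d - 1) ^ 2 ∂chiSq d) := by
        rw [integral_const_mul, integral_add hint₀ hint₁]; ring
    _ ≤ 4 * k ^ 2 * (2 + (2 + 4 * (k - 1) * k) * (2 * (k - 1).natAbs + 1) ^ (k - 1).natAbs) := by
        gcongr 4 * k ^ 2 * ?_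
        linarith
    _ ≤ _ := le_max_left _ _
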